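/- arXiv:2104.08935 — 2 statements merged into one kernel-verified Lean document; each statement's English description precedes it below -/
import Mathlib

section
/- On the hypersurface H defined by R(r) = 2m(v,r), the squared norm of the normal N_a = ∇_a(R - 2m) equals |N|^2 = -4 e^{-β} m_{,v} ( r/sqrt(r^2+c^2) - 2 m_{,r} ). Consequently, if m_{,v} > 0 and r/sqrt(r^2+c^2) - 2 m_{,r} > 0 on H, then H is spacelike (|N|^2 < 0 with the normal timelike convention given), and if m_{,v} > 0 and r/sqrt(r^2+c^2) - 2 m_{,r} < 0, then |N|^2 > 0. -/
/-- On `H` (where `1 - 2m/R = 0`), with inverse metric components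
`g^{vv} = 0`, `g^{vr} = e^{-β}`, `g^{rr} = 1 - 2m/R`, and normal components
`N_v = -2 m_{,v}`, `N_r = R_{,r} - 2 m_{,r}` with `R_{,r} = r/sqrt(r^2+c^2)`:
the norm `2 g^{vr} N_v N_r = -4 e^{-β} m_{,v}(r/sqrt(r^2+c^2) - 2 m_{,r})`, with the
stated sign consequences. -/
theorem stmt4 (c r β mv mr grr : ℝ) (hH : grr = 0) :
    let Rr := r / Real.sqrt (r ^ 2 + c ^ 2)
    let Nv := -2 * mv
    let Nr := Rr - 2 * mr
    let norm2 := 2 * Real.exp (-β) * Nv * Nr + grr * Nr ^ 2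
    norm2 = -4 * Real.exp (-β) * mv * (Rr - 2 * mr) ∧
      (0 < mv → (0 < Rr - 2 * mr → norm2 < 0) ∧ (Rr - 2 * mr < 0 → 0 < norm2)) := by
  intro Rr Nv Nr norm2
  have heq : norm2 = -4 * Real.exp (-β) * mv * (Rr - 2 * mr) := by
    simp only [norm2, Nv, Nr, hH]; ring
  refine ⟨heq, fun hmv => ⟨fun hpos => ?_, fun hneg => ?_⟩⟩
  · rw [heq]
    nlinarith [mul_pos (mul_pos (Real.exp_pos (-β)) hmv) hpos]
  · rw [heq]
    nlinarith [mul_pos (mul_pos (Real.exp_pos (-β)) hmv) (neg_pos.mpr hneg)]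
end

section
/- For the Simpson–Martin-Moruno–Visser metric, the curvature invariant combination evaluated at r = 0 satisfies (2Λ - W_0)|_{r=0} = (2m - c)/(2c^3), where W_0 = -(3m(c^2 - 2r^2) sqrt(r^2+c^2) - 2c^4 - 2c^2 r^2)/(6(r^2+c^2)^3) and Λ = (3m - sqrt(r^2+c^2)) c^2 / (12 sqrt(r^2+c^2)(r^2+c^2)^2). Consequently (2Λ - W_0)|_{r=0} is negative, zero, or positive according as 2m < c, 2m = c, or 2m > c. -/
/-!
Writing `s = √(r² + c²)`, the combination `2Λ - W₀` collapses for every `r` to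
`(2m(c² - r²) - c² s) / (2 s⁵)`. At the throat `r = 0` we have `s = c`, giving
`(2m - c) / (2c³)`, whose sign is that of `2m - c` because the denominator is positive.
-/

namespace SMV

open Real

/- Carminati–McLenaghan invariants `W₀` and `Λ` of the Simpson–Martin-Moruno–Visser metric
`ds² = -(1 - 2m/√(r² + c²)) dv² + 2 dv dr + (r² + c²) dΩ²`. -/

noncomputable def W0 (m c r : ℝ) : ℝ :=
  -(3 * m * (c ^ 2 - 2 * r ^ 2) * √(r ^ 2 + c ^ 2) - 2 * c ^ 4 - 2 * c ^ 2 * r ^ 2) /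
    (6 * (r ^ 2 + c ^ 2) ^ 3)

noncomputable def Λ (m c r : ℝ) : ℝ :=
  (3 * m - √(r ^ 2 + c ^ 2)) * c ^ 2 / (12 * √(r ^ 2 + c ^ 2) * (r ^ 2 + c ^ 2) ^ 2)

theorem two_mul_Λ_sub_W0 {c : ℝ} (hc : c ≠ 0) (m r : ℝ) :
    2 * Λ m c r - W0 m c r =
      (2 * m * (c ^ 2 - r ^ 2) - c ^ 2 * √(r ^ 2 + c ^ 2)) / (2 * √(r ^ 2 + c ^ 2) ^ 5) := by
  have hs : 0 < √(r ^ 2 + c ^ 2) := sqrt_pos.2 (by positivity)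
  have hr : r ^ 2 = √(r ^ 2 + c ^ 2) ^ 2 - c ^ 2 := by
    rw [sq_sqrt (by positivity)]; ring
  unfold Λ W0
  generalize √(r ^ 2 + c ^ 2) = s at hs hr ⊢
  rw [hr]
  field_simp
  ring

theorem two_mul_Λ_sub_W0_zero {c : ℝ} (hc : 0 < c) (m : ℝ) :
    2 * Λ m c 0 - W0 m c 0 = (2 * m - c) / (2 * c ^ 3) := by
  have hs : √(0 ^ 2 + c ^ 2) = c := by rw [zero_pow two_ne_zero, zero_add, sqrt_sq hc.le]
  rw [two_mul_Λ_sub_W0 hc.ne', hs]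
  field_simp
  ring

end SMV

/-- for the SMV metric, `(2Λ - W_0)|_{r=0} = (2m - c)/(2c^3)`, with the
sign trichotomy according as `2m < c`, `2m = c`, `2m > c`. -/
theorem stmt7 (c m : ℝ) (hc : 0 < c) :
    let r : ℝ := 0
    let W0 := -(3 * m * (c ^ 2 - 2 * r ^ 2) * Real.sqrt (r ^ 2 + c ^ 2)
        - 2 * c ^ 4 - 2 * c ^ 2 * r ^ 2) / (6 * (r ^ 2 + c ^ 2) ^ 3)
    let Λ := (3 * m - Real.sqrt (r ^ 2 + c ^ 2)) * c ^ 2 /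
        (12 * Real.sqrt (r ^ 2 + c ^ 2) * (r ^ 2 + c ^ 2) ^ 2)
    2 * Λ - W0 = (2 * m - c) / (2 * c ^ 3) ∧
      (2 * Λ - W0 < 0 ↔ 2 * m < c) ∧
      (2 * Λ - W0 = 0 ↔ 2 * m = c) ∧
      (0 < 2 * Λ - W0 ↔ c < 2 * m) := by
  intro r W0 Λ
  have key : 2 * Λ - W0 = (2 * m - c) / (2 * c ^ 3) := SMV.two_mul_Λ_sub_W0_zero hc m
  have hd : 0 < 2 * c ^ 3 := by positivity
  rw [key, div_lt_iff₀ hd, zero_mul, sub_neg, div_eq_zero_iff,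
    or_iff_left hd.ne', sub_eq_zero, div_pos_iff_of_pos_right hd, sub_pos]
  exact ⟨rfl, Iff.rfl, Iff.rfl, Iff.rfl⟩
end
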